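/- arXiv:1502.00842 — 3 statements merged into one kernel-verified Lean document; each statement's English description precedes it below -/
import Mathlib

section
/- Let M be a k×n binary matrix and 0 ≤ δ ≤ n−k. Then the following are equivalent: (a) for every ℓ ∈ [k] and every J ⊆ [n] with |J| = ℓ+δ, the union of the column supports C_M(j) for j ∈ J has size at least ℓ; (b) for every nonempty I ⊆ [k], the union of the row supports R_M(i) for i ∈ I has size at least n − k + |I| − δ. -/
def rowSupp {k n : ℕ} (M : Fin k → Fin n → Bool) (i : Fin k) : Finset (Fin n) :=
  Finset.univ.filter (fun j => M i j)

def colSupp {k n : ℕ} (M : Fin k → Fin n → Bool) (j : Fin n) : Finset (Fin k) :=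
  Finset.univ.filter (fun i => M i j)

/-- For a `k × n` binary matrix `M` and `0 ≤ δ ≤ n-k`, the following are
equivalent: (a) for every `ℓ ∈ [k]` and every `J ⊆ [n]` with `|J| = ℓ+δ`,
`|⋃_{j∈J} C_M(j)| ≥ ℓ`; (b) for every nonempty `I ⊆ [k]`,
`|⋃_{i∈I} R_M(i)| ≥ n - k + |I| - δ`. -/
theorem stmt6 {k n δ : ℕ} (hkn : k ≤ n) (hδ : δ ≤ n - k)
    (M : Fin k → Fin n → Bool) :
    (∀ ℓ : ℕ, 1 ≤ ℓ → ℓ ≤ k → ∀ J : Finset (Fin n), J.card = ℓ + δ →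
        ℓ ≤ (J.biUnion (colSupp M)).card) ↔
      (∀ I : Finset (Fin k), I.Nonempty →
        n - k + I.card - δ ≤ (I.biUnion (rowSupp M)).card) := by
  constructor
  · intro ha I hI
    by_contra hc
    push_neg at hc
    set S := I.biUnion (rowSupp M) with hSdef
    have hI1 : 1 ≤ I.card := Finset.card_pos.mpr hI
    have hIk : I.card ≤ k := by
      simpa using Finset.card_le_card (Finset.subset_univ I)
    have hSn : S.card ≤ n := by
      simpa using Finset.card_le_card (Finset.subset_univ S)
    have hcompl : (Sᶜ : Finset (Fin n)).card = n - S.card := by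
      simp [Finset.card_compl]
    set ℓ := k - I.card + 1 with hℓdef
    have hle : ℓ + δ ≤ (Sᶜ : Finset (Fin n)).card := by omega
    obtain ⟨J, hJsub, hJcard⟩ := Finset.exists_subset_card_eq hle
    have hℓ1 : 1 ≤ ℓ := by omega
    have hℓk : ℓ ≤ k := by omega
    have hmain := ha ℓ hℓ1 hℓk J hJcard
    have hsub : J.biUnion (colSupp M) ⊆ Iᶜ := by
      intro i hi
      simp only [Finset.mem_biUnion, colSupp, Finset.mem_filter] at hi
      obtain ⟨j, hjJ, -, hMij⟩ := hi
      simp only [Finset.mem_compl]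
      intro hiI
      have hjS : j ∈ S := by
        simp only [hSdef, Finset.mem_biUnion, rowSupp, Finset.mem_filter]
        exact ⟨i, hiI, Finset.mem_univ j, hMij⟩
      have := hJsub hjJ
      simp [hjS] at this
    have hcard : (J.biUnion (colSupp M)).card ≤ k - I.card := by
      have := Finset.card_le_card hsub
      simp [Finset.card_compl] at this
      omega
    omega
  · intro hb ℓ hℓ1 hℓk J hJcard
    by_contra hc
    push_neg at hc
    set C := J.biUnion (colSupp M) with hCdef
    have hCk : C.card ≤ k := by
      simpa using Finset.card_le_card (Finset.subset_univ C)
    have hJn : J.card ≤ n := by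
      simpa using Finset.card_le_card (Finset.subset_univ J)
    have hIcard : (Cᶜ : Finset (Fin k)).card = k - C.card := by
      simp [Finset.card_compl]
    have hne : (Cᶜ : Finset (Fin k)).Nonempty := by
      rw [← Finset.card_pos]; omega
    have hsub : (Cᶜ : Finset (Fin k)).biUnion (rowSupp M) ⊆ Jᶜ := by
      intro j hj
      simp only [Finset.mem_biUnion, rowSupp, Finset.mem_filter] at hj
      obtain ⟨i, hiI, -, hMij⟩ := hj
      simp only [Finset.mem_compl]
      intro hjJ
      have : i ∈ C := by
        simp only [hCdef, Finset.mem_biUnion, colSupp, Finset.mem_filter]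
        exact ⟨j, hjJ, Finset.mem_univ i, hMij⟩
      simp [this] at hiI
    have h1 := Finset.card_le_card hsub
    have h2 := hb _ hne
    simp [Finset.card_compl, hJcard] at h1
    omega
end

section
/- Let M be a k×n binary matrix with 0 ≤ δ ≤ n−k, and suppose that for every nonempty I ⊆ [k], |⋃_{i∈I} R_M(i)| ≥ n − k + |I| − δ. Then for every J ⊆ [n] with |J| = k+δ, the bipartite graph with left vertices [k], right vertices J, and edges {(i,j) : m_{i,j}=1} has a matching saturating [k]. -/
/-- If `M` is a `k × n` binary matrix, `0 ≤ δ ≤ n-k`, and for every nonempty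
`I ⊆ [k]` we have `|⋃_{i∈I} R_M(i)| ≥ n - k + |I| - δ`, then for every
`J ⊆ [n]` with `|J| = k+δ`, the bipartite graph between `[k]` and `J` with
edges at the 1-entries of `M` has a matching saturating `[k]`. -/
theorem stmt7 {k n δ : ℕ} (hkn : k ≤ n) (hδ : δ ≤ n - k)
    (M : Fin k → Fin n → Bool)
    (hrow : ∀ I : Finset (Fin k), I.Nonempty →
      n - k + I.card - δ ≤ (I.biUnion (rowSupp M)).card) :
    ∀ J : Finset (Fin n), J.card = k + δ →
      ∃ f : Fin k → Fin n, Function.Injective f ∧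
        ∀ i, f i ∈ J ∧ M i (f i) = true := by
  intro J hJ
  have := (Finset.all_card_le_biUnion_card_iff_existsInjective'
    (fun i : Fin k => J ∩ rowSupp M i)).mp ?_
  · obtain ⟨f, hf, hmem⟩ := this
    refine ⟨f, hf, fun i => ?_⟩
    have := hmem i
    simp only [Finset.mem_inter, rowSupp, Finset.mem_filter] at this
    exact ⟨this.1, this.2.2⟩
  · intro s
    rcases s.eq_empty_or_nonempty with rfl | hs
    · simp
    have h1 := hrow s hs
    have hsub : s.biUnion (fun i => J ∩ rowSupp M i) = J ∩ s.biUnion (rowSupp M) := by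
      ext x; simp [Finset.mem_biUnion, Finset.mem_inter]; tauto
    rw [hsub]
    have hA : (s.biUnion (rowSupp M)).card ≤ n := by
      simpa using Finset.card_le_card (Finset.subset_univ (s.biUnion (rowSupp M)))
    have hunion : (J ∪ s.biUnion (rowSupp M)).card ≤ n := by
      simpa using Finset.card_le_univ (J ∪ s.biUnion (rowSupp M))
    have hie := Finset.card_inter_add_card_union J (s.biUnion (rowSupp M))
    have hsk : s.card ≤ k := by
      simpa using Finset.card_le_card (Finset.subset_univ s)
    omega
end

section
/- Let M be a k×n binary matrix such that every square k×k submatrix that admits a system of distinct representatives has nonzero generic determinant, and suppose for every nonempty I ⊆ [k], |⋃_{i∈I} R_M(i)| ≥ n − k + |I| − δ where 0 ≤ δ ≤ n−k. Then over any field F with |F| > C(n−1, k−1), there exists a k×n matrix G over F supported by M (i.e., G_{i,j} = 0 whenever M_{i,j} = 0) such that every set of k+δ columns of G has rank k; consequently the linear code generated by G has minimum distance at least n−k+1−δ. -/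
def hWeight {n : ℕ} {F : Type*} [DecidableEq F] [Zero F] (c : Fin n → F) : ℕ :=
  (Finset.univ.filter (fun j => c j ≠ 0)).card

/-- The generic matrix supported by a binary matrix `M`: an indeterminate
`x_{i,j}` at each position where `M` has a `1`, and `0` elsewhere. -/
noncomputable def genericMatrix {k n : ℕ} (F : Type*) [Field F]
    (M : Fin k → Fin n → Bool) :
    Matrix (Fin k) (Fin n) (MvPolynomial (Fin k × Fin n) F) :=
  fun i j => if M i j then MvPolynomial.X (i, j) else 0

open MvPolynomial Finset in
lemma degreeOf_genericDet_le {k n : ℕ} {F : Type*} [Field F] (M : Fin k → Fin n → Bool)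
    (g : Fin k → Fin n) (i0 : Fin k) (j : Fin n) :
    degreeOf (i0, j) ((genericMatrix F M).submatrix id g).det ≤
      (Finset.univ.filter fun c : Fin k => g c = j).card := by
  classical
  rw [Matrix.det_apply]
  refine (MvPolynomial.degreeOf_sum_le _ _ _).trans (Finset.sup_le ?_)
  intro τ _
  rw [Units.smul_def, zsmul_eq_mul, ← map_intCast (C : F →+* MvPolynomial (Fin k × Fin n) F)]
  refine (MvPolynomial.degreeOf_C_mul_le _ _ _).trans ?_
  refine (MvPolynomial.degreeOf_prod_le _ _ _).trans ?_
  rw [Finset.card_filter]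
  apply Finset.sum_le_sum
  intro c _
  simp only [Matrix.submatrix_apply, id_eq, genericMatrix]
  by_cases hM : M (τ c) (g c)
  · rw [if_pos hM, MvPolynomial.degreeOf_X]
    by_cases hgc : g c = j
    · simp [hgc]; split <;> simp
    · simp only [hgc, if_false, Nat.le_zero, ite_eq_right_iff]
      intro he
      exact absurd (congrArg Prod.snd he).symm hgc
  · rw [if_neg hM, MvPolynomial.degreeOf_zero]
    exact Nat.zero_le _

lemma card_filter_mem_powersetCard_le {n k : ℕ} (j : Fin n) :
    (((Finset.univ : Finset (Fin n)).powersetCard k).filter fun S => j ∈ S).card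
      ≤ Nat.choose (n - 1) (k - 1) := by
  classical
  have h1 : ((((Finset.univ : Finset (Fin n))).erase j).powersetCard (k - 1)).card
      = Nat.choose (n - 1) (k - 1) := by
    rw [Finset.card_powersetCard, Finset.card_erase_of_mem (Finset.mem_univ j),
      Finset.card_univ, Fintype.card_fin]
  rw [← h1]
  apply Finset.card_le_card_of_injOn (fun S => S.erase j)
  · intro S hS
    rw [Finset.mem_coe, Finset.mem_filter, Finset.mem_powersetCard] at hS
    rw [Finset.mem_coe, Finset.mem_powersetCard]
    exact ⟨Finset.erase_subset_erase j (Finset.subset_univ S),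
      by rw [Finset.card_erase_of_mem hS.2, hS.1.2]⟩
  · intro S1 h1' S2 h2' he
    simp only [Finset.coe_filter, Set.mem_setOf_eq] at h1' h2'
    have he' : S1.erase j = S2.erase j := he
    rw [← Finset.insert_erase h1'.2, ← Finset.insert_erase h2'.2, he']

universe u

lemma exists_eval_ne_zero_of_degreeOf_lt {σ : Type} [Fintype σ] [DecidableEq σ]
    {F : Type u} [Field F] [Fintype F] [DecidableEq F]
    (P : MvPolynomial σ F) (hP : P ≠ 0)
    (hdeg : ∀ v, P.degreeOf v < Fintype.card F) :
    ∃ a : σ → F, MvPolynomial.eval a P ≠ 0 := by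
  classical
  by_contra h
  push_neg at h
  set Q : MvPolynomial (ULift.{u} σ) F := MvPolynomial.rename ULift.up P with hQdef
  have hup : Function.Injective (ULift.up : σ → ULift.{u} σ) :=
    fun a b hab => congrArg ULift.down hab
  have hQ0 : Q = 0 := by
    apply MvPolynomial.eq_zero_of_eval_eq_zero
    · intro v
      rw [hQdef, MvPolynomial.eval_rename]
      exact h _
    · rw [MvPolynomial.mem_restrictDegree_iff_sup]
      intro i
      rw [← MvPolynomial.degreeOf_def]
      have h2 : Q.degreeOf (ULift.up i.down) = P.degreeOf i.down :=
        MvPolynomial.degreeOf_rename_of_injective hup i.down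
      have h3 : (ULift.up i.down : ULift.{u} σ) = i := rfl
      rw [h3] at h2
      rw [h2]
      have := hdeg i.down
      omega
  apply hP
  have : MvPolynomial.rename (ULift.up : σ → ULift.{u} σ) P
      = MvPolynomial.rename ULift.up (0 : MvPolynomial σ F) := by
    simpa [hQdef] using hQ0
  exact MvPolynomial.rename_injective _ hup this

/-- Let `M` be a `k × n` binary matrix such that every `k × k` submatrix of
the generic matrix of `M` whose columns admit a system of distinct
representatives has nonzero (generic) determinant, and suppose
`|⋃_{i∈I} R_M(i)| ≥ n - k + |I| - δ` for every nonempty `I ⊆ [k]`, where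
`0 ≤ δ ≤ n-k`.  Then over any finite field `F` with `|F| > C(n-1,k-1)` there
is a `k × n` matrix `G` over `F` supported by `M` such that every set of
`k+δ` columns of `G` has rank `k`; consequently the code generated by `G`
has minimum distance at least `n-k+1-δ`. -/
theorem stmt8 {k n δ : ℕ} (hkn : k ≤ n) (hδ : δ ≤ n - k)
    (F : Type*) [Field F] [Fintype F] [DecidableEq F]
    (hF : Nat.choose (n - 1) (k - 1) < Fintype.card F)
    (M : Fin k → Fin n → Bool)
    (hSDR : ∀ g : Fin k → Fin n, Function.Injective g →
      (∃ σ : Equiv.Perm (Fin k), ∀ i, M i (g (σ i)) = true) →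
      ((genericMatrix F M).submatrix id g).det ≠ 0)
    (hrow : ∀ I : Finset (Fin k), I.Nonempty →
      n - k + I.card - δ ≤ (I.biUnion (rowSupp M)).card) :
    ∃ G : Matrix (Fin k) (Fin n) F,
      (∀ i j, M i j = false → G i j = 0) ∧
      (∀ J : Finset (Fin n), J.card = k + δ →
        (G.submatrix id (fun j : {x // x ∈ J} => (j : Fin n))).rank = k) ∧
      (∀ u : Fin k → F, Matrix.vecMul u G ≠ 0 →
        n - k + 1 - δ ≤ hWeight (Matrix.vecMul u G)) := by
  classical
  set 𝒮 : Finset (Finset (Fin n)) := (Finset.univ : Finset (Fin n)).powersetCard k with h𝒮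
  set dpoly : Finset (Fin n) → MvPolynomial (Fin k × Fin n) F := fun S =>
    if h : S.card = k then
      (if ((genericMatrix F M).submatrix id (S.orderEmbOfFin h)).det = 0 then 1
       else ((genericMatrix F M).submatrix id (S.orderEmbOfFin h)).det)
    else 1 with hdpoly
  have hdpoly_ne : ∀ S, dpoly S ≠ 0 := by
    intro S
    rw [hdpoly]
    dsimp only
    split
    · split
      · exact one_ne_zero
      · assumption
    · exact one_ne_zero
  set P : MvPolynomial (Fin k × Fin n) F := ∏ S ∈ 𝒮, dpoly S with hPdef
  have hP : P ≠ 0 := Finset.prod_ne_zero_iff.mpr fun S _ => hdpoly_ne S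
  have hdeg : ∀ v : Fin k × Fin n, P.degreeOf v < Fintype.card F := by
    rintro ⟨i0, j⟩
    refine lt_of_le_of_lt ?_ hF
    refine (MvPolynomial.degreeOf_prod_le _ _ _).trans ?_
    have hstep : ∀ S ∈ 𝒮, (dpoly S).degreeOf (i0, j) ≤ if j ∈ S then 1 else 0 := by
      intro S hS
      rw [h𝒮, Finset.mem_powersetCard] at hS
      rw [hdpoly]
      dsimp only
      rw [dif_pos hS.2]
      split
      · have h0 : MvPolynomial.degreeOf (i0, j) (1 : MvPolynomial (Fin k × Fin n) F) = 0 := by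
          simpa using MvPolynomial.degreeOf_C (1 : F) (i0, j)
        rw [h0]
        exact Nat.zero_le _
      · refine (degreeOf_genericDet_le M _ i0 j).trans ?_
        split
        · next hj =>
            apply Finset.card_le_one.mpr
            intro a ha b hb
            rw [Finset.mem_filter] at ha hb
            exact (S.orderEmbOfFin hS.2).injective (ha.2.trans hb.2.symm)
        · next hj =>
            rw [Finset.card_eq_zero.mpr]
            rw [Finset.filter_eq_empty_iff]
            intro c _ hc
            exact hj (hc ▸ S.orderEmbOfFin_mem hS.2 c)
    calc ∑ S ∈ 𝒮, (dpoly S).degreeOf (i0, j)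
        ≤ ∑ S ∈ 𝒮, (if j ∈ S then 1 else 0) := Finset.sum_le_sum hstep
      _ = (𝒮.filter fun S => j ∈ S).card := (Finset.card_filter _ _).symm
      _ ≤ Nat.choose (n - 1) (k - 1) := card_filter_mem_powersetCard_le j
  obtain ⟨a, ha⟩ := exists_eval_ne_zero_of_degreeOf_lt P hP hdeg
  set G : Matrix (Fin k) (Fin n) F := fun i j => if M i j then a (i, j) else 0 with hGdef
  have hGmap : G = (genericMatrix F M).map (MvPolynomial.eval a) := by
    ext i j
    rw [hGdef, Matrix.map_apply, genericMatrix]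
    dsimp only
    split <;> simp
  -- the key construction: inside any `k+δ` columns we find an invertible `k×k` submatrix
  have key : ∀ J : Finset (Fin n), J.card = k + δ → ∃ g : Fin k → Fin n,
      Function.Injective g ∧ (∀ i, g i ∈ J) ∧ IsUnit (G.submatrix id g) := by
    intro J hJ
    have hall : ∀ I : Finset (Fin k), I.card ≤ (I.biUnion fun i => rowSupp M i ∩ J).card := by
      intro I
      rcases I.eq_empty_or_nonempty with rfl | hI
      · simp
      · have h1 := hrow I hI
        have hbi : I.biUnion (fun i => rowSupp M i ∩ J) = (I.biUnion (rowSupp M)) ∩ J := by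
          ext x
          simp only [Finset.mem_biUnion, Finset.mem_inter]
          tauto
        rw [hbi]
        set A := I.biUnion (rowSupp M) with hA
        have h2 : (A ∩ J).card + (A \ J).card = A.card := Finset.card_inter_add_card_sdiff A J
        have h3 : (A \ J).card ≤ n - J.card := by
          have hsub : A \ J ⊆ Finset.univ \ J := by
            exact Finset.sdiff_subset_sdiff (Finset.subset_univ A) le_rfl
          refine (Finset.card_le_card hsub).trans ?_
          rw [Finset.card_sdiff_of_subset (Finset.subset_univ J), Finset.card_univ, Fintype.card_fin]
        have hIcard : I.card ≤ k := by
          have := Finset.card_le_card (Finset.subset_univ I)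
          rwa [Finset.card_univ, Fintype.card_fin] at this
        omega
    obtain ⟨f, hfinj, hf⟩ := (Finset.all_card_le_biUnion_card_iff_exists_injective _).mp hall
    have hfM : ∀ i, M i (f i) = true := by
      intro i
      have := (Finset.mem_inter.mp (hf i)).1
      simpa [rowSupp] using this
    have hfJ : ∀ i, f i ∈ J := fun i => (Finset.mem_inter.mp (hf i)).2
    set S : Finset (Fin n) := Finset.univ.image f with hSdef
    have hSk : S.card = k := by
      rw [hSdef, Finset.card_image_of_injective _ hfinj, Finset.card_univ, Fintype.card_fin]
    set g : Fin k → Fin n := fun i => S.orderEmbOfFin hSk i with hgdef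
    have hginj : Function.Injective g := (S.orderEmbOfFin hSk).injective
    have hgS : ∀ i, g i ∈ S := fun i => S.orderEmbOfFin_mem hSk i
    have hSJ : S ⊆ J := by
      intro x hx
      rw [hSdef, Finset.mem_image] at hx
      obtain ⟨i, _, rfl⟩ := hx
      exact hfJ i
    have hmemS : ∀ i, f i ∈ S := fun i => Finset.mem_image_of_mem f (Finset.mem_univ i)
    have hσ : ∃ σ : Equiv.Perm (Fin k), ∀ i, M i (g (σ i)) = true := by
      set σ0 : Fin k → Fin k := fun i => (S.orderIsoOfFin hSk).symm ⟨f i, hmemS i⟩ with hσ0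
      have hgσ : ∀ i, g (σ0 i) = f i := by
        intro i
        rw [hgdef, hσ0]
        dsimp only
        rw [← Finset.coe_orderIsoOfFin_apply, OrderIso.apply_symm_apply]
      have hσ0inj : Function.Injective σ0 := by
        intro i i' hii
        apply hfinj
        rw [← hgσ i, ← hgσ i', hii]
      refine ⟨Equiv.ofBijective σ0 (Finite.injective_iff_bijective.mp hσ0inj), ?_⟩
      intro i
      have : (Equiv.ofBijective σ0 (Finite.injective_iff_bijective.mp hσ0inj)) i = σ0 i := rfl
      rw [this, hgσ]
      exact hfM i
    have hdetgen : ((genericMatrix F M).submatrix id g).det ≠ 0 := hSDR g hginj hσ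
    have hS𝒮 : S ∈ 𝒮 := by
      rw [h𝒮, Finset.mem_powersetCard]
      exact ⟨Finset.subset_univ S, hSk⟩
    have hevalP : MvPolynomial.eval a (dpoly S) ≠ 0 := by
      intro h0
      apply ha
      rw [hPdef, map_prod]
      exact Finset.prod_eq_zero hS𝒮 h0
    have hdS : dpoly S = ((genericMatrix F M).submatrix id g).det := by
      rw [hdpoly]
      dsimp only
      rw [dif_pos hSk, if_neg (by rwa [hgdef] at hdetgen)]
    have hdetG : (G.submatrix id g).det ≠ 0 := by
      have h1 : (G.submatrix id g) = ((genericMatrix F M).submatrix id g).map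
          (MvPolynomial.eval a) := by
        rw [hGmap]; rfl
      have h2 : (G.submatrix id g).det
          = MvPolynomial.eval a (((genericMatrix F M).submatrix id g).det) := by
        rw [h1, ← RingHom.mapMatrix_apply, ← RingHom.map_det]
      rw [h2, ← hdS]
      exact hevalP
    exact ⟨g, hginj, fun i => hSJ (hgS i),
      (Matrix.isUnit_iff_isUnit_det _).mpr (isUnit_iff_ne_zero.mpr hdetG)⟩
  refine ⟨G, ?_, ?_, ?_⟩
  · intro i j hij
    rw [hGdef]
    simp [hij]
  · intro J hJ
    obtain ⟨g, hginj, hgJ, hunit⟩ := key J hJ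
    set A := G.submatrix id (fun j : {x // x ∈ J} => (j : Fin n)) with hAdef
    apply le_antisymm
    · have := A.rank_le_card_height
      simpa using this
    · set e : Fin k → {x // x ∈ J} := fun i => ⟨g i, hgJ i⟩ with hedef
      set B := G.submatrix id g with hBdef
      have hBu : IsUnit B.det := (Matrix.isUnit_iff_isUnit_det _).mp hunit
      have hsurj : Function.Surjective A.mulVecLin := by
        intro y
        set x0 : Fin k → F := B⁻¹.mulVec y with hx0
        refine ⟨fun j => ∑ i, if e i = j then x0 i else 0, ?_⟩
        have hBx : B.mulVec x0 = y := by
          rw [hx0, Matrix.mulVec_mulVec, Matrix.mul_nonsing_inv _ hBu, Matrix.one_mulVec]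
        ext r
        rw [Matrix.mulVecLin_apply]
        have : (A.mulVec fun j => ∑ i, if e i = j then x0 i else 0) r
            = ∑ j : {x // x ∈ J}, ∑ i : Fin k, if e i = j then A r j * x0 i else 0 := by
          rw [Matrix.mulVec, dotProduct]
          apply Finset.sum_congr rfl
          intro j _
          rw [Finset.mul_sum]
          apply Finset.sum_congr rfl
          intro i _
          rw [mul_ite, mul_zero]
        rw [this, Finset.sum_comm]
        have : ∀ i : Fin k, (∑ j : {x // x ∈ J}, if e i = j then A r j * x0 i else 0)
            = B r i * x0 i := by
          intro i
          rw [Finset.sum_ite_eq]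
          simp [hAdef, hBdef, hedef, Matrix.submatrix_apply]
        rw [Finset.sum_congr rfl (fun i _ => this i)]
        have := congrFun hBx r
        rw [Matrix.mulVec, dotProduct] at this
        exact this
      rw [Matrix.rank, LinearMap.range_eq_top.mpr hsurj, finrank_top,
        Module.finrank_fintype_fun_eq_card, Fintype.card_fin]
  · intro u hu
    by_contra hlt
    push_neg at hlt
    set c := Matrix.vecMul u G with hcdef
    have hweight : hWeight c ≤ n - k - δ := by omega
    set Z := Finset.univ.filter (fun j => c j = 0) with hZdef
    have hZcard : k + δ ≤ Z.card := by
      have hsplit : Z.card + hWeight c = n := by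
        have := Finset.card_filter_add_card_filter_not
          (s := (Finset.univ : Finset (Fin n))) (p := fun j => c j = 0)
        rw [Finset.card_univ, Fintype.card_fin] at this
        exact this
      omega
    obtain ⟨J, hJZ, hJcard⟩ := Finset.exists_subset_card_eq hZcard
    obtain ⟨g, hginj, hgJ, hunit⟩ := key J hJcard
    set B := G.submatrix id g with hBdef
    have hBu : IsUnit B.det := (Matrix.isUnit_iff_isUnit_det _).mp hunit
    have hvB : Matrix.vecMul u B = 0 := by
      ext i
      have h1 : (Matrix.vecMul u B) i = c (g i) := by
        rw [hcdef, hBdef, Matrix.vecMul, Matrix.vecMul, dotProduct, dotProduct]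
        rfl
      rw [h1]
      have h2 : g i ∈ Z := hJZ (hgJ i)
      rw [hZdef, Finset.mem_filter] at h2
      exact h2.2
    have hu0 : u = 0 := by
      have h3 := congrArg (fun v => Matrix.vecMul v B⁻¹) hvB
      rw [Matrix.vecMul_vecMul, Matrix.mul_nonsing_inv _ hBu, Matrix.vecMul_one,
        Matrix.zero_vecMul] at h3
      exact h3
    apply hu
    show Matrix.vecMul u G = 0
    rw [hu0, Matrix.zero_vecMul]
end
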